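/- Let Γ be a tetravalent G-half-arc-transitive graph for some G ≤ Aut(Γ) such that 3 ≤ a < r, where r = rad_G(Γ) and a = att_G(Γ), and suppose a does not divide r. Let q = jum_G(Γ), let ℓ = 2r/a, let C be a G-alternating cycle of Γ and let γ be a nontrivial element of K_G(Alt_G(Γ)). Then for some 0 < k ≤ a/2 the restriction of the action of γ to C is a kℓ-step rotation; moreover, for any two non-disjoint G-alternating cycles of Γ, the restriction of the action of γ is a kℓ-step rotation on one of them and a qkℓ-step rotation on the other. -/

import Mathlib

/-! Common definitions for tetravalent half-arc-transitive graph theory. -/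

open SimpleGraph Set

namespace HalfArc

variable {V W : Type*}

/-- A subgroup of automorphisms acts transitively on the vertices. -/
def IsVertexTrans (Γ : SimpleGraph V) (G : Subgroup (Γ ≃g Γ)) : Prop :=
  ∀ u v : V, ∃ g ∈ G, g u = v

/-- A subgroup of automorphisms acts transitively on the edges. -/
def IsEdgeTrans (Γ : SimpleGraph V) (G : Subgroup (Γ ≃g Γ)) : Prop :=
  ∀ ⦃u v u' v' : V⦄, Γ.Adj u v → Γ.Adj u' v' →
    ∃ g ∈ G, (g u = u' ∧ g v = v') ∨ (g u = v' ∧ g v = u')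

/-- A subgroup of automorphisms acts transitively on the arcs (ordered pairs of
adjacent vertices). -/
def IsArcTrans (Γ : SimpleGraph V) (G : Subgroup (Γ ≃g Γ)) : Prop :=
  ∀ ⦃u v u' v' : V⦄, Γ.Adj u v → Γ.Adj u' v' → ∃ g ∈ G, g u = u' ∧ g v = v'

/-- Half-arc-transitive: vertex- and edge- but not arc-transitive. -/
def IsHalfArcTrans (Γ : SimpleGraph V) (G : Subgroup (Γ ≃g Γ)) : Prop :=
  IsVertexTrans Γ G ∧ IsEdgeTrans Γ G ∧ ¬ IsArcTrans Γ G

/-- An alternating cycle of length `n` in a graph `Γ` whose edges carry an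
orientation `O`: a cyclic sequence of pairwise distinct vertices in which
consecutive vertices are adjacent and any two consecutive edges have opposite
orientations. -/
structure AltCycle (Γ : SimpleGraph V) (O : V → V → Prop) (n : ℕ) where
  f : ZMod n → V
  inj : Function.Injective f
  adj : ∀ i, Γ.Adj (f i) (f (i + 1))
  alt : ∀ i, O (f i) (f (i + 1)) ↔ O (f (i + 2)) (f (i + 1))

/-- The vertex set of an alternating cycle. -/
def cycVerts {Γ : SimpleGraph V} {O : V → V → Prop} {n : ℕ} (c : AltCycle Γ O n) : Set V :=
  Set.range c.f

/-- The edge set of an alternating cycle. -/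
def cycEdges {Γ : SimpleGraph V} {O : V → V → Prop} {n : ℕ} (c : AltCycle Γ O n) :
    Set (Sym2 V) :=
  Set.range fun i => s(c.f i, c.f (i + 1))

/-- The sets of edges of alternating cycles (an alternating cycle, as a subgraph,
is determined by its edge set). -/
def IsAltEdgeSet (Γ : SimpleGraph V) (O : V → V → Prop) (n : ℕ) (E : Set (Sym2 V)) : Prop :=
  ∃ c : AltCycle Γ O n, cycEdges c = E

/-- The vertex sets of alternating cycles. -/
def IsAltVertSet (Γ : SimpleGraph V) (O : V → V → Prop) (n : ℕ) (A : Set V) : Prop :=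
  ∃ c : AltCycle Γ O n, cycVerts c = A

/-- The set of vertices covered by a set of edges. -/
def suppOf (E : Set (Sym2 V)) : Set V := {v | ∃ e ∈ E, v ∈ e}

/-- The graph of alternating cycles: its vertices are the alternating cycles
(represented by their edge sets), two of them adjacent whenever they share a vertex. -/
def altGraph (Γ : SimpleGraph V) (O : V → V → Prop) (n : ℕ) :
    SimpleGraph {E : Set (Sym2 V) // IsAltEdgeSet Γ O n E} where
  Adj X Y := X ≠ Y ∧ (suppOf X.1 ∩ suppOf Y.1).Nonempty
  symm := by
    constructor
    rintro X Y ⟨hne, x, hx1, hx2⟩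
    exact ⟨hne.symm, x, hx2, hx1⟩
  loopless := by constructor; rintro X ⟨hne, -⟩; exact hne rfl

/-- The attachment sets: nonempty intersections of (the vertex sets of) two distinct
alternating cycles. -/
def IsAttSet (Γ : SimpleGraph V) (O : V → V → Prop) (n : ℕ) (A : Set V) : Prop :=
  ∃ c c' : AltCycle Γ O n, cycEdges c ≠ cycEdges c' ∧ (cycVerts c ∩ cycVerts c').Nonempty ∧
    A = cycVerts c ∩ cycVerts c'

/-- `attachmentIs Γ O n a` : any two distinct alternating cycles with nonempty
intersection meet in exactly `a` vertices. -/
def attachmentIs (Γ : SimpleGraph V) (O : V → V → Prop) (n a : ℕ) : Prop :=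
  ∀ A : Set V, IsAttSet Γ O n A → A.ncard = a

/-- A `k`-step rotation of an alternating cycle (in one of the two directions). -/
def IsRot {Γ : SimpleGraph V} {O : V → V → Prop} {n : ℕ} (c : AltCycle Γ O n)
    (g : V → V) (k : ℕ) : Prop :=
  (∀ i, g (c.f i) = c.f (i + k)) ∨ (∀ i, g (c.f i) = c.f (i - k))

/-- The setup of the paper: a finite connected tetravalent graph `Γ`, a subgroup `G`
of its automorphism group acting half-arc-transitively, one of the two `G`-induced
orientations `O` of the edges of `Γ` (an orbit of `G` on arcs), the `G`-radius `r`
(half the common length of all `G`-alternating cycles) and the `G`-attachment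
number `att`, together with the basic structural facts relating them. -/
structure Setup (V : Type*) where
  Γ : SimpleGraph V
  finite : Finite V
  conn : Γ.Connected
  tetra : ∀ v : V, (Γ.neighborSet v).ncard = 4
  G : Subgroup (Γ ≃g Γ)
  hat : IsHalfArcTrans Γ G
  O : V → V → Prop
  O_adj : ∀ ⦃u v⦄, O u v → Γ.Adj u v
  O_choice : ∀ ⦃u v⦄, Γ.Adj u v → (O u v ↔ ¬ O v u)
  O_inv : ∀ g ∈ G, ∀ ⦃u v⦄, O u v → O (g u) (g v)
  O_orbit : ∀ ⦃u v u' v'⦄, O u v → O u' v' → ∃ g ∈ G, g u = u' ∧ g v = v'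
  r : ℕ
  r_pos : 0 < r
  /-- every vertex lies on exactly two `G`-alternating cycles, each of length `2 * r` -/
  alt_cover : ∀ v : V, {E : Set (Sym2 V) | IsAltEdgeSet Γ O (2 * r) E ∧ v ∈ suppOf E}.ncard = 2
  att : ℕ
  att_pos : 0 < att
  /-- any two non-disjoint `G`-alternating cycles meet in exactly `att` vertices -/
  att_eq : attachmentIs Γ O (2 * r) att
  att_dvd : att ∣ 2 * r

namespace Setup

variable {V : Type*} (S : Setup V)

/-- The kernel of the action of `G` on the set of `G`-alternating cycles:
the elements of `G` fixing every `G`-alternating cycle setwise. -/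
def altKernel : Subgroup (S.Γ ≃g S.Γ) where
  carrier := {g | g ∈ S.G ∧ ∀ E : Set (Sym2 V),
    IsAltEdgeSet S.Γ S.O (2 * S.r) E → Sym2.map (g : V → V) '' E = E}
  one_mem' := by
    refine ⟨S.G.one_mem, fun E _ => ?_⟩
    have : Sym2.map ((1 : S.Γ ≃g S.Γ) : V → V) = id := by
      funext e
      have : ((1 : S.Γ ≃g S.Γ) : V → V) = id := rfl
      rw [this, Sym2.map_id, id]
    rw [this, Set.image_id]
  mul_mem' := by
    rintro g h ⟨hg, hg'⟩ ⟨hh, hh'⟩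
    refine ⟨S.G.mul_mem hg hh, fun E hE => ?_⟩
    have hcomp : Sym2.map ((g * h : S.Γ ≃g S.Γ) : V → V)
        = Sym2.map (g : V → V) ∘ Sym2.map (h : V → V) := by
      funext e
      have : ((g * h : S.Γ ≃g S.Γ) : V → V) = (g : V → V) ∘ (h : V → V) := rfl
      rw [this, Function.comp_apply, ← Sym2.map_map]
    rw [hcomp, Set.image_comp, hh' E hE, hg' E hE]
  inv_mem' := by
    rintro g ⟨hg, hg'⟩
    refine ⟨S.G.inv_mem hg, fun E hE => ?_⟩
    conv_lhs => rw [← hg' E hE]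
    rw [← Set.image_comp]
    have : Sym2.map ((g⁻¹ : S.Γ ≃g S.Γ) : V → V) ∘ Sym2.map (g : V → V) = id := by
      funext e
      rw [Function.comp_apply, Sym2.map_map]
      have h1 : ((g⁻¹ : S.Γ ≃g S.Γ) : V → V) ∘ (g : V → V) = id := by
        funext v
        exact g.toEquiv.symm_apply_apply v
      rw [h1, Sym2.map_id]
    rw [this, Set.image_id]

/-- The kernel of the action of `G` on a collection of sets of vertices. -/
def kernelOn (P : Set V → Prop) : Subgroup (S.Γ ≃g S.Γ) where
  carrier := {g | g ∈ S.G ∧ ∀ A : Set V, P A → (g : V → V) '' A = A}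
  one_mem' := ⟨S.G.one_mem, fun A _ => by
    have : ((1 : S.Γ ≃g S.Γ) : V → V) = id := rfl
    rw [this, Set.image_id]⟩
  mul_mem' := by
    rintro g h ⟨hg, hg'⟩ ⟨hh, hh'⟩
    refine ⟨S.G.mul_mem hg hh, fun A hA => ?_⟩
    have : ((g * h : S.Γ ≃g S.Γ) : V → V) = (g : V → V) ∘ (h : V → V) := rfl
    rw [this, Set.image_comp, hh' A hA, hg' A hA]
  inv_mem' := by
    rintro g ⟨hg, hg'⟩
    refine ⟨S.G.inv_mem hg, fun A hA => ?_⟩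
    conv_lhs => rw [← hg' A hA]
    rw [← Set.image_comp]
    have : ((g⁻¹ : S.Γ ≃g S.Γ) : V → V) ∘ (g : V → V) = id := by
      funext v; exact g.toEquiv.symm_apply_apply v
    rw [this, Set.image_id]

/-- The kernel of the action of `G` on the set of all `G`-attachment sets. -/
def attKernel : Subgroup (S.Γ ≃g S.Γ) :=
  S.kernelOn (IsAttSet S.Γ S.O (2 * S.r))

/-- The block `B_s(C; u_i) = {u_{i+2sj} : 0 ≤ j < att}` of Construction 5.3. -/
def blockSet (s : ℕ) (c : AltCycle S.Γ S.O (2 * S.r)) (i : ZMod (2 * S.r)) : Set V :=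
  {v | ∃ j : ℕ, j < S.att ∧ v = c.f (i + (2 * s * j : ℕ))}

/-- The imprimitivity block system `B` of Construction 5.3. -/
def Blocks (s : ℕ) : Set (Set V) :=
  {A | ∃ (c : AltCycle S.Γ S.O (2 * S.r)) (i : ZMod (2 * S.r)), A = S.blockSet s c i}

/-- The quotient graph `Γ_B` of `Γ` with respect to the block system `B`. -/
def quotGraph (s : ℕ) : SimpleGraph {A : Set V // A ∈ S.Blocks s} where
  Adj X Y := X ≠ Y ∧ ∃ u ∈ X.1, ∃ v ∈ Y.1, S.Γ.Adj u v
  symm := by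
    constructor
    rintro X Y ⟨hne, u, hu, v, hv, ha⟩
    exact ⟨hne.symm, v, hv, u, hu, ha.symm⟩
  loopless := by constructor; rintro X ⟨hne, -⟩; exact hne rfl

/-- The kernel of the action of `G` on the quotient graph `Γ_B`. -/
def quotKernel (s : ℕ) : Subgroup (S.Γ ≃g S.Γ) :=
  S.kernelOn (· ∈ S.Blocks s)

/-- The orientation of the edges of the quotient graph `Γ_B` induced by `O`. -/
def quotO (s : ℕ) (X Y : {A : Set V // A ∈ S.Blocks s}) : Prop :=
  ∃ u ∈ X.1, ∃ v ∈ Y.1, S.O u v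

end Setup

/-- The data defining the parameters `q_t` and `q_h` of Section 3: a vertex `v`,
the two `G`-alternating cycles `c` and `c'` through `v` (with `v = u_0 = v_0` and
`v` the tail of the two arcs of `c` incident to it), and the minimality properties
defining `q_t` and `q_h`.  Here `ell = 2r/att`. -/
structure JumpData {V : Type*} (S : Setup V) where
  v : V
  c : AltCycle S.Γ S.O (2 * S.r)
  c' : AltCycle S.Γ S.O (2 * S.r)
  ell : ℕ
  hell : S.att * ell = 2 * S.r
  hc : c.f 0 = v
  hc' : c'.f 0 = v
  hne : cycEdges c ≠ cycEdges c'
  htail₁ : S.O v (c.f 1)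
  htail₂ : S.O v (c.f (-1))
  qt : ℕ
  qh : ℕ
  hqt : c'.f ((qt * ell : ℕ)) = c.f ((ell : ℕ)) ∨
    c'.f ((qt * ell : ℕ)) = c.f (-(ell : ZMod (2 * S.r)))
  hqt_min : ∀ m : ℕ, m < qt → ¬(c'.f ((m * ell : ℕ)) = c.f ((ell : ℕ)) ∨
    c'.f ((m * ell : ℕ)) = c.f (-(ell : ZMod (2 * S.r))))
  hqh : c.f ((qh * ell : ℕ)) = c'.f ((ell : ℕ)) ∨
    c.f ((qh * ell : ℕ)) = c'.f (-(ell : ZMod (2 * S.r)))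
  hqh_min : ∀ m : ℕ, m < qh → ¬(c.f ((m * ell : ℕ)) = c'.f ((ell : ℕ)) ∨
    c.f ((m * ell : ℕ)) = c'.f (-(ell : ZMod (2 * S.r))))

/-- The `G`-alternating jump `jum_G(Γ) = min {q_t, q_h}`. -/
def JumpData.jump {V : Type*} {S : Setup V} (J : JumpData S) : ℕ := min J.qt J.qh

end HalfArc


open HalfArc

/-!
A kernel element `γ` fixes every `G`-alternating cycle setwise, so it acts on each of them as a
rotation or a reflection. Through every common vertex of two alternating cycles `G` contains an
element reflecting both (this needs `a ≥ 3`); hence the common vertices of two cycles are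
evenly spaced, `ℓ` apart. As `γ` also fixes the second cycle through each vertex, it moves every
vertex by a multiple of `ℓ`; since `ℓ ≥ 3` this excludes reflections, so `γ` rotates each cycle
`C` by some `t_C ∈ ℓ ℤ / 2r ℤ`, and `t_C ≠ 0` unless `γ = 1`.

Any two cycles meeting at a vertex which is the tail of the first are mapped by `G` onto any other
such pair, up to reversing the second cycle. For the pair of `J`, stepping `ℓ` along the first
cycle amounts to stepping `s ℓ` along the second; hence `t_D = ± s t_C` for any two intersecting
cycles `C, D`, in either order because `ℓ` is odd. So `s² t_C = ± t_C`, and by connectivity every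
`t_C` is `± t` or `± s t`, where `t` is the rotation of the given cycle. Finally the definitions
of `q_t` and `q_h` give `q_t ℓ = ± s ℓ` and `q_h s ℓ = ± ℓ`, so that `q k ℓ = ± s t` when
`k ℓ = ± t`.
-/


namespace HalfArc

def SignEq {R : Type*} [Neg R] (a b : R) : Prop := a = b ∨ a = -b

namespace SignEq

variable {R : Type*} [Ring R] {a b c : R}

theorem refl (a : R) : SignEq a a := Or.inl rfl

theorem symm (h : SignEq a b) : SignEq b a := by
  rcases h with rfl | rfl
  exacts [refl a, Or.inr (neg_neg b).symm]

theorem trans (h₁ : SignEq a b) (h₂ : SignEq b c) : SignEq a c := by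
  rcases h₁ with rfl | rfl <;> rcases h₂ with rfl | rfl
  exacts [refl a, Or.inr rfl, Or.inr rfl, Or.inl (neg_neg c)]

instance : @Trans R R R SignEq SignEq SignEq := ⟨trans⟩

theorem mul_left (c : R) (h : SignEq a b) : SignEq (c * a) (c * b) := by
  rcases h with rfl | rfl
  exacts [refl _, Or.inr (mul_neg c b)]

theorem mul_right (c : R) (h : SignEq a b) : SignEq (a * c) (b * c) := by
  rcases h with rfl | rfl
  exacts [refl _, Or.inr (neg_mul b c)]

end SignEq

end HalfArc

namespace ZMod

theorem natCast_dvd_iff_dvd_val {n ℓ : ℕ} [NeZero n] (hℓ : ℓ ∣ n) (x : ZMod n) :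
    (ℓ : ZMod n) ∣ x ↔ ℓ ∣ x.val := by
  constructor
  · rintro ⟨u, rfl⟩
    rw [← ZMod.natCast_zmod_val u, ← Nat.cast_mul, ZMod.val_natCast, Nat.dvd_mod_iff hℓ]
    exact dvd_mul_right ℓ _
  · rintro ⟨m, hm⟩
    exact ⟨m, by rw [← ZMod.natCast_zmod_val x, hm, Nat.cast_mul]⟩

theorem natCast_dvd_natCast_iff {n ℓ : ℕ} [NeZero n] (hℓ : ℓ ∣ n) (k : ℕ) :
    (ℓ : ZMod n) ∣ (k : ZMod n) ↔ ℓ ∣ k := by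
  rw [natCast_dvd_iff_dvd_val hℓ, ZMod.val_natCast, Nat.dvd_mod_iff hℓ]

theorem exists_signEq_mul_of_dvd {n a ℓ : ℕ} [NeZero n] (haℓ : a * ℓ = n) {t : ZMod n}
    (ht : (ℓ : ZMod n) ∣ t) (ht0 : t ≠ 0) :
    ∃ k : ℕ, 0 < k ∧ 2 * k ≤ a ∧ SignEq ((k * ℓ : ℕ) : ZMod n) t := by
  have hℓ : ℓ ∣ n := ⟨a, by rw [← haℓ, mul_comm]⟩
  obtain ⟨m, hm⟩ := (natCast_dvd_iff_dvd_val hℓ t).mp ht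
  have htm : t = ((m * ℓ : ℕ) : ZMod n) := by rw [← ZMod.natCast_zmod_val t, hm, mul_comm]
  have hm0 : 0 < m := Nat.pos_of_ne_zero fun h => ht0 (by simp [htm, h])
  have hma : m < a := by
    have := ZMod.val_lt t
    rw [hm, ← haℓ, mul_comm] at this
    exact Nat.lt_of_mul_lt_mul_right this
  rcases le_total (2 * m) a with h | h
  · exact ⟨m, hm0, h, Or.inl htm.symm⟩
  · refine ⟨a - m, by omega, by omega, Or.inr ?_⟩
    have : ((a - m) * ℓ + m * ℓ : ℕ) = n := by
      rw [← add_mul, Nat.sub_add_cancel hma.le, haℓ]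
    rw [htm, eq_neg_iff_add_eq_zero, ← Nat.cast_add, this, ZMod.natCast_self]

theorem eq_zero_or_eq_of_add_self_eq_zero {r : ℕ} (hr : 0 < r) {x : ZMod (2 * r)}
    (h : x + x = 0) : x = 0 ∨ x = r := by
  have : NeZero (2 * r) := ⟨by omega⟩
  have hlt := ZMod.val_lt x
  have hmod : (x.val + x.val) % (2 * r) = 0 := by rw [← ZMod.val_add, h, ZMod.val_zero]
  rw [← ZMod.natCast_zmod_val x]
  by_cases hsmall : x.val + x.val < 2 * r
  · rw [Nat.mod_eq_of_lt hsmall] at hmod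
    left; rw [show x.val = 0 by omega, Nat.cast_zero]
  · rw [Nat.mod_eq_sub_mod (by omega), Nat.mod_eq_of_lt (by omega)] at hmod
    right; rw [show x.val = r by omega]

section ReflectionClosed

variable {n : ℕ} {I : Set (ZMod n)} {e : ℕ}

theorem natCast_mul_mem_of_two_mul_sub_mem (h0 : 0 ∈ I)
    (hI : ∀ p ∈ I, ∀ x ∈ I, 2 * p - x ∈ I) (he : (e : ZMod n) ∈ I) (k : ℕ) :
    ((k * e : ℕ) : ZMod n) ∈ I := by
  suffices ((k * e : ℕ) : ZMod n) ∈ I ∧ (((k + 1) * e : ℕ) : ZMod n) ∈ I from this.1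
  induction k with
  | zero => simpa using ⟨h0, he⟩
  | succ k ih =>
    refine ⟨ih.2, ?_⟩
    convert hI _ ih.2 _ ih.1 using 1
    push_cast; ring

theorem dvd_val_of_two_mul_sub_mem [NeZero n] (h0 : 0 ∈ I)
    (hI : ∀ p ∈ I, ∀ x ∈ I, 2 * p - x ∈ I) (he : (e : ZMod n) ∈ I) (he0 : 0 < e)
    (hmin : ∀ m : ℕ, 0 < m → m < e → (m : ZMod n) ∉ I)
    {y : ZMod n} (hy : y ∈ I) : e ∣ y.val := by
  have hneg : ∀ x ∈ I, -x ∈ I := fun x hx => by simpa using hI 0 h0 x hx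
  set q := y.val / e
  set w := y.val % e
  have hy' : y = ((2 * (q / 2) * e + (q % 2 * e + w) : ℕ) : ZMod n) := by
    have hq := Nat.div_add_mod q 2
    calc y = ((e * q + w : ℕ) : ZMod n) := by rw [Nat.div_add_mod, ZMod.natCast_zmod_val]
      _ = ((e * (2 * (q / 2) + q % 2) + w : ℕ) : ZMod n) := by rw [hq]
      _ = _ := by ring_nf
  -- reflecting through `0` and then through `-(q / 2) * e` translates `y` by `-2 * (q / 2) * e`
  have hw : ((q % 2 * e + w : ℕ) : ZMod n) ∈ I := by
    convert hI _ (hneg _ (natCast_mul_mem_of_two_mul_sub_mem h0 hI he (q / 2))) _ (hneg y hy)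
      using 1
    rw [hy']; push_cast; ring
  have hwe : w < e := Nat.mod_lt _ he0
  refine Nat.dvd_of_mod_eq_zero (Nat.eq_zero_of_not_pos fun hw0 => ?_)
  rcases Nat.mod_two_eq_zero_or_one q with hq | hq
  · exact hmin w hw0 hwe (by simpa [hq] using hw)
  · refine hmin (e - w) (by omega) (by omega) ?_
    convert hI _ he _ hw using 1
    rw [hq, Nat.cast_sub hwe.le]; push_cast; ring

theorem dvd_of_two_mul_sub_mem (h0 : 0 ∈ I) (hI : ∀ p ∈ I, ∀ x ∈ I, 2 * p - x ∈ I)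
    (he : (e : ZMod n) ∈ I) (he0 : 0 < e)
    (hmin : ∀ m : ℕ, 0 < m → m < e → (m : ZMod n) ∉ I) : e ∣ n := by
  refine Nat.dvd_of_mod_eq_zero (Nat.eq_zero_of_not_pos fun hw0 => ?_)
  have hwe : n % e < e := Nat.mod_lt _ he0
  refine hmin (e - n % e) (by omega) (by omega) ?_
  convert natCast_mul_mem_of_two_mul_sub_mem h0 hI he (n / e + 1) using 1
  have : ((n / e + 1) * e : ℕ) = (e - n % e) + n := by
    have := Nat.div_add_mod n e
    calc (n / e + 1) * e = e * (n / e) + e := by ring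
      _ = (e - n % e) + n := by omega
  rw [this, Nat.cast_add, ZMod.natCast_self, add_zero]

/-- A set closed under the point reflections `x ↦ 2 * p - x` through its own points is the
subgroup generated by its least positive element; `hcard` then identifies that element. -/
theorem mem_iff_natCast_dvd_of_two_mul_sub_mem [NeZero n] {ℓ : ℕ} (h0 : 0 ∈ I)
    (hI : ∀ p ∈ I, ∀ x ∈ I, 2 * p - x ∈ I) (hcard : I.ncard * ℓ = n) (x : ZMod n) :
    x ∈ I ↔ (ℓ : ZMod n) ∣ x := by
  have hex : ∃ m : ℕ, 0 < m ∧ (m : ZMod n) ∈ I :=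
    ⟨n, Nat.pos_of_ne_zero (NeZero.ne n), by rwa [ZMod.natCast_self]⟩
  classical
  obtain ⟨he0, he⟩ := Nat.find_spec hex
  have hmin : ∀ m : ℕ, 0 < m → m < Nat.find hex → (m : ZMod n) ∉ I :=
    fun m hm hme hmI => Nat.find_min hex hme ⟨hm, hmI⟩
  have hmul := natCast_mul_mem_of_two_mul_sub_mem h0 hI he
  have hdvd := dvd_of_two_mul_sub_mem h0 hI he he0 hmin
  have hI_eq : I = AddSubgroup.zmultiples (Nat.find hex : ZMod n) := by
    ext y
    rw [SetLike.mem_coe, AddSubgroup.mem_zmultiples_iff]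
    constructor
    · intro hy
      obtain ⟨m, hm⟩ := dvd_val_of_two_mul_sub_mem h0 hI he he0 hmin hy
      exact ⟨m, by rw [natCast_zsmul, nsmul_eq_mul, ← Nat.cast_mul, mul_comm, ← hm,
        ZMod.natCast_zmod_val]⟩
    · rintro ⟨k, rfl⟩
      rw [zsmul_eq_mul, ← ZMod.natCast_zmod_val (k : ZMod n), ← Nat.cast_mul]
      exact hmul _
  have hℓ : ℓ = Nat.find hex := by
    rw [hI_eq, ← Nat.card_coe_set_eq, SetLike.coe_sort_coe, Nat.card_zmultiples,
      ZMod.addOrderOf_coe _ (NeZero.ne n), Nat.gcd_eq_right hdvd] at hcard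
    have hpos : 0 < n / Nat.find hex := Nat.div_pos (Nat.le_of_dvd (NeZero.pos n) hdvd) he0
    exact Nat.eq_of_mul_eq_mul_left hpos (hcard.trans (Nat.div_mul_cancel hdvd).symm)
  rw [hℓ, natCast_dvd_iff_dvd_val hdvd]
  exact ⟨dvd_val_of_two_mul_sub_mem h0 hI he he0 hmin, fun ⟨m, hm⟩ => by
    rw [← ZMod.natCast_zmod_val x, hm, mul_comm]; exact hmul m⟩

end ReflectionClosed

end ZMod

namespace HalfArc

namespace AltCycle

variable {V : Type*} {Γ : SimpleGraph V} {O : V → V → Prop} {n : ℕ}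

theorem f_mem_cycVerts (c : AltCycle Γ O n) (i : ZMod n) : c.f i ∈ cycVerts c := ⟨i, rfl⟩

theorem mk_mem_cycEdges (c : AltCycle Γ O n) (i : ZMod n) :
    s(c.f i, c.f (i + 1)) ∈ cycEdges c := ⟨i, rfl⟩

theorem suppOf_cycEdges (c : AltCycle Γ O n) : suppOf (cycEdges c) = cycVerts c := by
  ext v
  constructor
  · rintro ⟨e, ⟨i, rfl⟩, hv⟩
    rcases Sym2.mem_iff.mp hv with rfl | rfl
    exacts [⟨i, rfl⟩, ⟨i + 1, rfl⟩]
  · rintro ⟨i, rfl⟩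
    exact ⟨_, c.mk_mem_cycEdges i, Sym2.mem_mk_left _ _⟩

theorem cycVerts_eq_of_cycEdges_eq {b c : AltCycle Γ O n} (h : cycEdges b = cycEdges c) :
    cycVerts b = cycVerts c := by
  rw [← suppOf_cycEdges, h, suppOf_cycEdges]

theorem eq_add_one_or_eq_sub_one_of_mk_mem (c : AltCycle Γ O n) {j : ZMod n} {y : V}
    (he : s(c.f j, y) ∈ cycEdges c) : y = c.f (j + 1) ∨ y = c.f (j - 1) := by
  obtain ⟨i, hi⟩ := he
  rcases Sym2.eq_iff.mp hi with ⟨h₁, h₂⟩ | ⟨h₁, h₂⟩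
  · exact Or.inl (by rw [← h₂, c.inj h₁])
  · exact Or.inr (by rw [← h₁, ← c.inj h₂, add_sub_cancel_right])

def shift (c : AltCycle Γ O n) (p : ZMod n) : AltCycle Γ O n where
  f i := c.f (p + i)
  inj _ _ h := add_left_cancel (c.inj h)
  adj i := by simpa only [add_assoc] using c.adj (p + i)
  alt i := by simpa only [add_assoc] using c.alt (p + i)

@[simp] theorem shift_f (c : AltCycle Γ O n) (p i : ZMod n) : (c.shift p).f i = c.f (p + i) :=
  rfl

theorem cycEdges_shift (c : AltCycle Γ O n) (p : ZMod n) : cycEdges (c.shift p) = cycEdges c := by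
  ext e
  constructor
  · rintro ⟨i, rfl⟩
    exact ⟨p + i, by simp only [shift_f, add_assoc]⟩
  · rintro ⟨i, rfl⟩
    exact ⟨i - p, by simp only [shift_f, add_sub_cancel, ← add_sub_right_comm]⟩

def reverse (c : AltCycle Γ O n) : AltCycle Γ O n where
  f i := c.f (-i)
  inj _ _ h := neg_injective (c.inj h)
  adj i := by simpa [neg_add_rev, add_comm] using (c.adj (-(i + 1))).symm
  alt i := by
    have := (c.alt (-(i + 2))).symm
    rwa [show -(i + 2) + 1 = -(i + 1) by ring, show -(i + 2) + 2 = -i by ring] at this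

@[simp] theorem reverse_f (c : AltCycle Γ O n) (i : ZMod n) : c.reverse.f i = c.f (-i) := rfl

theorem cycEdges_reverse (c : AltCycle Γ O n) : cycEdges c.reverse = cycEdges c := by
  ext e
  constructor
  · rintro ⟨i, rfl⟩
    refine ⟨-(i + 1), ?_⟩
    simp only [reverse_f]
    rw [show -(i + 1) + 1 = -i by ring, Sym2.eq_swap]
  · rintro ⟨i, rfl⟩
    refine ⟨-(i + 1), ?_⟩
    simp only [reverse_f]
    rw [neg_neg, show -(-(i + 1) + 1) = i by ring, Sym2.eq_swap]

def map (c : AltCycle Γ O n) (g : Γ ≃g Γ) (hg : ∀ u v, O (g u) (g v) ↔ O u v) :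
    AltCycle Γ O n where
  f i := g (c.f i)
  inj _ _ h := c.inj (g.injective h)
  adj i := g.map_adj_iff.mpr (c.adj i)
  alt i := by simpa only [hg] using c.alt i

@[simp] theorem map_f (c : AltCycle Γ O n) (g : Γ ≃g Γ) (hg : ∀ u v, O (g u) (g v) ↔ O u v)
    (i : ZMod n) : (c.map g hg).f i = g (c.f i) := rfl

theorem cycEdges_map (c : AltCycle Γ O n) (g : Γ ≃g Γ)
    (hg : ∀ u v, O (g u) (g v) ↔ O u v) : cycEdges (c.map g hg) = Sym2.map g '' cycEdges c := by
  ext e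
  constructor
  · rintro ⟨i, rfl⟩
    exact ⟨_, c.mk_mem_cycEdges i, rfl⟩
  · rintro ⟨_, ⟨i, rfl⟩, rfl⟩
    exact ⟨i, rfl⟩

section Rigidity

variable [NeZero n]

theorem eq_shift_of_cycEdges_eq {b c : AltCycle Γ O n} (hE : cycEdges b = cycEdges c)
    {p : ZMod n} (h₀ : b.f 0 = c.f p) (h₁ : b.f 1 = c.f (p + 1)) (i : ZMod n) :
    b.f i = c.f (p + i) := by
  have key : ∀ m : ℕ, b.f m = c.f (p + m) ∧ b.f (m + 1) = c.f (p + m + 1) := by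
    intro m
    induction m with
    | zero => simpa using ⟨h₀, h₁⟩
    | succ m ih =>
      push_cast
      refine ⟨by rw [ih.2, add_assoc], ?_⟩
      have he := b.mk_mem_cycEdges (m + 1)
      rw [hE, ih.2, add_assoc] at he
      rcases c.eq_add_one_or_eq_sub_one_of_mk_mem he with h | h
      · rw [h]
      · have h2 : (m + 1 + 1 : ZMod n) = m := b.inj (by rw [h, ih.1]; ring_nf)
        rw [h, show p + (m + 1) + 1 = p + (m + 1 + 1) by ring, h2]; ring_nf
  simpa using (key i.val).1

theorem exists_eq_add_or_eq_sub_of_cycEdges_eq {b c : AltCycle Γ O n}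
    (hE : cycEdges b = cycEdges c) :
    ∃ p, (∀ i, b.f i = c.f (p + i)) ∨ ∀ i, b.f i = c.f (p - i) := by
  obtain ⟨p, hp⟩ : b.f 0 ∈ cycVerts c := by
    rw [← cycVerts_eq_of_cycEdges_eq hE]; exact b.f_mem_cycVerts 0
  have he : s(c.f p, b.f 1) ∈ cycEdges c := by
    simpa [hp, hE] using b.mk_mem_cycEdges 0
  refine ⟨p, ?_⟩
  rcases c.eq_add_one_or_eq_sub_one_of_mk_mem he with h | h
  · exact Or.inl (eq_shift_of_cycEdges_eq hE hp.symm h)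
  · refine Or.inr fun i => ?_
    have hE' : cycEdges b = cycEdges c.reverse := by rw [cycEdges_reverse, hE]
    rw [eq_shift_of_cycEdges_eq hE' (p := -p) (by simp [hp]) (by rw [h, reverse_f]; ring_nf) i,
      reverse_f]
    ring_nf

theorem eq_or_eq_neg_of_cycEdges_eq {b c : AltCycle Γ O n} (hE : cycEdges b = cycEdges c)
    (h₀ : b.f 0 = c.f 0) : (∀ i, b.f i = c.f i) ∨ ∀ i, b.f i = c.f (-i) := by
  obtain ⟨p, h | h⟩ := exists_eq_add_or_eq_sub_of_cycEdges_eq hE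
  all_goals
    have hp : p = 0 := c.inj (by simpa using (h 0).symm.trans h₀)
    subst hp
  · exact Or.inl fun i => by simpa using h i
  · exact Or.inr fun i => by simpa using h i

end Rigidity

def RotatesBy (c : AltCycle Γ O n) (g : V → V) (t : ZMod n) : Prop :=
  ∀ i, g (c.f i) = c.f (i + t)

namespace RotatesBy

variable {c : AltCycle Γ O n} {g : V → V} {t : ZMod n}

theorem unique {t' : ZMod n} (h : c.RotatesBy g t) (h' : c.RotatesBy g t') : t = t' := by
  simpa using c.inj ((h 0).symm.trans (h' 0))

theorem shift (h : c.RotatesBy g t) (p : ZMod n) : (c.shift p).RotatesBy g t := fun i => by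
  simp only [shift_f, h (p + i), add_assoc]

theorem of_cycEdges_eq [NeZero n] {b : AltCycle Γ O n} (hE : cycEdges b = cycEdges c)
    (h : c.RotatesBy g t) : b.RotatesBy g t ∨ b.RotatesBy g (-t) := by
  obtain ⟨p, hp | hp⟩ := exists_eq_add_or_eq_sub_of_cycEdges_eq hE
  · exact Or.inl fun i => by rw [hp, h, hp, add_assoc]
  · exact Or.inr fun i => by rw [hp, h, hp]; ring_nf

theorem isRot {k : ℕ} (h : c.RotatesBy g t) (hk : SignEq (k : ZMod n) t) : IsRot c g k := by
  rcases hk with hk | hk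
  · exact Or.inl fun i => by rw [hk, h]
  · exact Or.inr fun i => by rw [hk, sub_neg_eq_add, h]

end RotatesBy

end AltCycle

namespace Setup

open AltCycle

variable {V : Type*} (S : Setup V)

instance : NeZero (2 * S.r) := ⟨by have := S.r_pos; omega⟩

abbrev Cyc : Type _ := AltCycle S.Γ S.O (2 * S.r)

def ell : ℕ := 2 * S.r / S.att

theorem att_mul_ell : S.att * S.ell = 2 * S.r := Nat.mul_div_cancel' S.att_dvd

theorem ell_dvd : S.ell ∣ 2 * S.r := Dvd.intro_left _ S.att_mul_ell

theorem two_lt_ell (har : S.att < S.r) : 2 < S.ell := by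
  have := S.att_mul_ell
  by_contra h
  have : S.att * S.ell ≤ S.att * 2 := Nat.mul_le_mul_left _ (by omega)
  omega

theorem odd_ell (hdvd : ¬ S.att ∣ S.r) : Odd S.ell := by
  refine Nat.not_even_iff_odd.mp fun ⟨m, hm⟩ => hdvd ⟨m, ?_⟩
  have := S.att_mul_ell
  rw [hm] at this
  linarith

variable {S}

theorem O_map_iff {g : S.Γ ≃g S.Γ} (hg : g ∈ S.G) (u v : V) :
    S.O (g u) (g v) ↔ S.O u v := by
  refine ⟨fun h => ?_, fun h => S.O_inv g hg h⟩
  simpa using S.O_inv g⁻¹ (S.G.inv_mem hg) h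

theorem mem_coverSet {c : S.Cyc} {v : V} (hv : v ∈ cycVerts c) :
    cycEdges c ∈ {E | IsAltEdgeSet S.Γ S.O (2 * S.r) E ∧ v ∈ suppOf E} :=
  ⟨⟨c, rfl⟩, by rwa [suppOf_cycEdges]⟩

theorem cycEdges_eq_or_eq_of_mem {v : V} {b c d : S.Cyc} (hb : v ∈ cycVerts b)
    (hc : v ∈ cycVerts c) (hd : v ∈ cycVerts d) (hbc : cycEdges b ≠ cycEdges c) :
    cycEdges d = cycEdges b ∨ cycEdges d = cycEdges c := by
  obtain ⟨E₁, E₂, -, hset⟩ := Set.ncard_eq_two.mp (S.alt_cover v)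
  have h₁ := mem_coverSet hb
  have h₂ := mem_coverSet hc
  have h₃ := mem_coverSet hd
  simp only [hset, Set.mem_insert_iff, Set.mem_singleton_iff] at h₁ h₂ h₃
  rcases h₁ with h₁ | h₁ <;> rcases h₂ with h₂ | h₂ <;> rcases h₃ with h₃ | h₃ <;>
    simp_all

theorem exists_cycEdges_ne_of_mem {c : S.Cyc} {v : V} (hv : v ∈ cycVerts c) :
    ∃ d : S.Cyc, v ∈ cycVerts d ∧ cycEdges d ≠ cycEdges c := by
  obtain ⟨E₁, E₂, hE, hset⟩ := Set.ncard_eq_two.mp (S.alt_cover v)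
  have hc := mem_coverSet hv
  obtain ⟨E, hE', hEc⟩ : ∃ E ∈ ({E₁, E₂} : Set _), E ≠ cycEdges c := by
    rw [hset] at hc
    rcases hc with rfl | rfl
    exacts [⟨E₂, by simp, hE.symm⟩, ⟨E₁, by simp, hE⟩]
  rw [← hset] at hE'
  obtain ⟨⟨d, rfl⟩, hvd⟩ := hE'
  exact ⟨d, by rwa [suppOf_cycEdges] at hvd, hEc⟩

theorem exists_mem_cycVerts (v : V) : ∃ c : S.Cyc, v ∈ cycVerts c := by
  obtain ⟨E, ⟨c, rfl⟩, hv⟩ := Set.nonempty_of_ncard_ne_zero (by rw [S.alt_cover v]; omega)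
  exact ⟨c, by rwa [suppOf_cycEdges] at hv⟩

theorem exists_mk_mem_cycEdges {u w : V} (h : S.Γ.Adj u w) :
    ∃ c : S.Cyc, s(u, w) ∈ cycEdges c := by
  obtain ⟨c, -⟩ := exists_mem_cycVerts (S := S) u
  obtain ⟨g, hg, ⟨rfl, rfl⟩ | ⟨rfl, rfl⟩⟩ := S.hat.2.1 (c.adj 0) h
  · exact ⟨c.map g (O_map_iff hg), by simpa using (c.map g (O_map_iff hg)).mk_mem_cycEdges 0⟩
  · exact ⟨c.map g (O_map_iff hg), by
      simpa [Sym2.eq_swap] using (c.map g (O_map_iff hg)).mk_mem_cycEdges 0⟩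

theorem exists_O : ∃ u w, S.O u w := by
  obtain ⟨c, -⟩ := exists_mem_cycVerts (S := S) (S.conn.nonempty.some)
  by_cases h : S.O (c.f 0) (c.f (0 + 1))
  · exact ⟨_, _, h⟩
  · exact ⟨_, _, (S.O_choice (c.adj 0).symm).mpr h⟩

theorem exists_O_right (v : V) : ∃ w, S.O v w := by
  obtain ⟨x, y, hxy⟩ := exists_O (S := S)
  obtain ⟨g, hg, rfl⟩ := S.hat.1 x v
  exact ⟨g y, S.O_inv g hg hxy⟩

theorem exists_O_left (v : V) : ∃ u, S.O u v := by
  obtain ⟨x, y, hxy⟩ := exists_O (S := S)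
  obtain ⟨g, hg, rfl⟩ := S.hat.1 y v
  exact ⟨g x, S.O_inv g hg hxy⟩

def IsTail (c : S.Cyc) (x : ZMod (2 * S.r)) : Prop := S.O (c.f x) (c.f (x + 1))

theorem isTail_iff_sub_one (c : S.Cyc) (x : ZMod (2 * S.r)) :
    IsTail c x ↔ S.O (c.f x) (c.f (x - 1)) := by
  have halt := c.alt (x - 1)
  rw [sub_add_cancel, show x - 1 + 2 = x + 1 by ring] at halt
  have hadj := c.adj (x - 1)
  rw [sub_add_cancel] at hadj
  rw [IsTail, S.O_choice (c.adj x), S.O_choice hadj.symm, halt]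

theorem isTail_iff_of_mk_mem {c : S.Cyc} {x : ZMod (2 * S.r)} {u : V}
    (he : s(c.f x, u) ∈ cycEdges c) : IsTail c x ↔ S.O (c.f x) u := by
  rcases c.eq_add_one_or_eq_sub_one_of_mk_mem he with rfl | rfl
  exacts [Iff.rfl, isTail_iff_sub_one c x]

theorem isTail_add_one (c : S.Cyc) (x : ZMod (2 * S.r)) : IsTail c (x + 1) ↔ ¬ IsTail c x := by
  have halt := c.alt x
  rw [show x + 2 = x + 1 + 1 by ring] at halt
  rw [IsTail, IsTail, S.O_choice (c.adj (x + 1)), halt]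

theorem isTail_add_natCast (c : S.Cyc) (x : ZMod (2 * S.r)) (m : ℕ) :
    IsTail c (x + m) ↔ (Even m ↔ IsTail c x) := by
  induction m with
  | zero => simp
  | succ m ih =>
    rw [Nat.cast_succ, ← add_assoc, isTail_add_one, ih, Nat.even_add_one]
    tauto

/-- Every edge at a vertex lies on one of the two alternating cycles through it, and on each of
them both edges at the vertex point the same way. -/
theorem isTail_iff_not_isTail {c d : S.Cyc} {x y : ZMod (2 * S.r)} (hxy : c.f x = d.f y)
    (hne : cycEdges c ≠ cycEdges d) : IsTail c x ↔ ¬ IsTail d y := by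
  have hside : ∀ w, S.Γ.Adj (c.f x) w →
      (IsTail c x ↔ S.O (c.f x) w) ∨ (IsTail d y ↔ S.O (c.f x) w) := by
    intro w hw
    obtain ⟨F, hF⟩ := exists_mk_mem_cycEdges hw
    have hvF : c.f x ∈ cycVerts F := by
      rw [← suppOf_cycEdges]; exact ⟨_, hF, Sym2.mem_mk_left _ _⟩
    rcases cycEdges_eq_or_eq_of_mem (c.f_mem_cycVerts x) (hxy ▸ d.f_mem_cycVerts y) hvF hne
      with h | h
    · exact Or.inl (isTail_iff_of_mk_mem (h ▸ hF))
    · rw [hxy] at hF ⊢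
      exact Or.inr (isTail_iff_of_mk_mem (h ▸ hF))
  obtain ⟨w, hw⟩ := exists_O_right (c.f x)
  obtain ⟨u, hu⟩ := exists_O_left (c.f x)
  have hu' : ¬ S.O (c.f x) u := (S.O_choice (S.O_adj hu)).mp hu
  rcases hside w (S.O_adj hw) with h₁ | h₁ <;>
    rcases hside u (S.O_adj hu).symm with h₂ | h₂ <;> tauto

theorem cycEdges_eq_of_mem_of_mem {b c : S.Cyc} {e : Sym2 V} (hb : e ∈ cycEdges b)
    (hc : e ∈ cycEdges c) : cycEdges b = cycEdges c := by
  by_contra hne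
  obtain ⟨i, rfl⟩ := hb
  obtain ⟨j, hj⟩ := hc
  rcases Sym2.eq_iff.mp hj with ⟨h₁, h₂⟩ | ⟨h₁, h₂⟩
  · have := isTail_iff_not_isTail h₁ (Ne.symm hne)
    rw [IsTail, IsTail, h₁, h₂] at this
    exact iff_not_self this
  · have := isTail_iff_not_isTail h₁ (Ne.symm hne)
    rw [IsTail, isTail_iff_sub_one, h₁, h₂, add_sub_cancel_right] at this
    exact iff_not_self this

theorem ncard_cycVerts_inter {c d : S.Cyc} (hne : cycEdges c ≠ cycEdges d)
    (h : (cycVerts c ∩ cycVerts d).Nonempty) : (cycVerts c ∩ cycVerts d).ncard = S.att :=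
  S.att_eq _ ⟨c, d, hne, h, rfl⟩

theorem ncard_cycVerts_inter_le_two {g : V → V} {c d : S.Cyc} (hgc : ∀ i, g (c.f i) = c.f (-i))
    (hgd : ∀ j, g (d.f j) = d.f j) : (cycVerts c ∩ cycVerts d).ncard ≤ 2 := by
  have hsub : cycVerts c ∩ cycVerts d ⊆ {c.f 0, c.f S.r} := by
    rintro _ ⟨⟨i, rfl⟩, ⟨j, hj⟩⟩
    have hi : -i = i := c.inj (by rw [← hgc, ← hj, hgd])
    rcases ZMod.eq_zero_or_eq_of_add_self_eq_zero S.r_pos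
      (by rw [← neg_add_cancel i, hi] : i + i = 0) with rfl | rfl <;> simp
  exact (Set.ncard_le_ncard hsub).trans ((Set.ncard_insert_le _ _).trans (by simp))

theorem map_eq_or_map_eq_neg_of_map_eq {g : S.Γ ≃g S.Γ} (hg : g ∈ S.G) {c d c' d' : S.Cyc}
    (hne : cycEdges c ≠ cycEdges d) (hb : c.f 0 = d.f 0) (hne' : cycEdges c' ≠ cycEdges d')
    (hb' : c'.f 0 = d'.f 0) (hc : ∀ i, g (c.f i) = c'.f i) :
    (∀ j, g (d.f j) = d'.f j) ∨ ∀ j, g (d.f j) = d'.f (-j) := by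
  set d₁ := d.map g (O_map_iff hg)
  have h₀ : d₁.f 0 = d'.f 0 := by rw [map_f, ← hb, hc, hb']
  have hE : cycEdges d₁ = cycEdges d' := by
    refine (cycEdges_eq_or_eq_of_mem (c'.f_mem_cycVerts 0) (hb' ▸ d'.f_mem_cycVerts 0)
      (by rw [hb', ← h₀]; exact d₁.f_mem_cycVerts 0) hne').resolve_left fun h => hne ?_
    have hc' : cycEdges (c.map g (O_map_iff hg)) = cycEdges c' := by
      simp only [cycEdges, map_f, hc]
    rw [cycEdges_map] at hc' h
    exact Set.image_injective.mpr (Sym2.map.injective g.injective) (hc'.trans h.symm)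
  exact eq_or_eq_neg_of_cycEdges_eq hE h₀

theorem exists_reflection_of_f_zero_eq (h3 : 3 ≤ S.att) {c d : S.Cyc}
    (hne : cycEdges c ≠ cycEdges d) (hb : c.f 0 = d.f 0) :
    ∃ g ∈ S.G, (∀ i, g (c.f i) = c.f (-i)) ∧ ∀ j, g (d.f j) = d.f (-j) := by
  obtain ⟨g, hg, hg₀, hg₁⟩ : ∃ g ∈ S.G, g (c.f 0) = c.f 0 ∧ g (c.f 1) = c.f (-1) := by
    have hadj₁ : S.Γ.Adj (c.f 0) (c.f 1) := by simpa using c.adj 0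
    have hadj₂ : S.Γ.Adj (c.f 0) (c.f (-1)) := by simpa using (c.adj (-1)).symm
    by_cases ht : IsTail c 0
    · have h₂ := (isTail_iff_sub_one c 0).mp ht
      rw [IsTail, zero_add] at ht
      rw [zero_sub] at h₂
      obtain ⟨g, hg, h⟩ := S.O_orbit ht h₂
      exact ⟨g, hg, h⟩
    · have h₂ := mt (isTail_iff_sub_one c 0).mpr ht
      rw [IsTail, zero_add] at ht
      rw [zero_sub] at h₂
      obtain ⟨g, hg, h₁, h₀⟩ := S.O_orbit ((S.O_choice hadj₁.symm).mpr ht)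
        ((S.O_choice hadj₂.symm).mpr h₂)
      exact ⟨g, hg, h₀, h₁⟩
  have hgc : ∀ i, g (c.f i) = c.f (-i) := by
    have hE : cycEdges (c.map g (O_map_iff hg)) = cycEdges c.reverse := by
      refine cycEdges_eq_of_mem_of_mem (e := s(c.f 0, c.f (-1))) ?_ ?_
      · simpa [hg₀, hg₁] using (c.map g (O_map_iff hg)).mk_mem_cycEdges 0
      · rw [cycEdges_reverse]; simpa [Sym2.eq_swap] using c.mk_mem_cycEdges (-1)
    intro i
    simpa using eq_shift_of_cycEdges_eq hE (p := 0) (by simpa using hg₀) (by simpa using hg₁) i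
  refine ⟨g, hg, hgc, ?_⟩
  refine (map_eq_or_map_eq_neg_of_map_eq hg hne hb (c' := c.reverse)
    (by rwa [cycEdges_reverse]) (by simpa using hb) hgc).resolve_left fun hfix => ?_
  have := ncard_cycVerts_inter hne ⟨_, c.f_mem_cycVerts 0, hb ▸ d.f_mem_cycVerts 0⟩
  have := ncard_cycVerts_inter_le_two hgc hfix
  omega

theorem exists_reflection (h3 : 3 ≤ S.att) {c d : S.Cyc} (hne : cycEdges c ≠ cycEdges d)
    {i j : ZMod (2 * S.r)} (hij : c.f i = d.f j) :
    ∃ g ∈ S.G, (∀ x, g (c.f (i + x)) = c.f (i - x)) ∧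
      ∀ y, g (d.f (j + y)) = d.f (j - y) := by
  obtain ⟨g, hg, hgc, hgd⟩ := exists_reflection_of_f_zero_eq h3 (c := c.shift i)
    (d := d.shift j) (by rwa [cycEdges_shift, cycEdges_shift]) (by simpa using hij)
  exact ⟨g, hg, fun x => by simpa [sub_eq_add_neg] using hgc x,
    fun y => by simpa [sub_eq_add_neg] using hgd y⟩

/-- The positions on `c` of the common vertices are closed under the reflections of
`exists_reflection`. -/
theorem mem_cycVerts_iff_dvd (h3 : 3 ≤ S.att) {c d : S.Cyc} (hne : cycEdges c ≠ cycEdges d)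
    {i j : ZMod (2 * S.r)} (hij : c.f i = d.f j) (x : ZMod (2 * S.r)) :
    c.f (i + x) ∈ cycVerts d ↔ (S.ell : ZMod (2 * S.r)) ∣ x := by
  refine ZMod.mem_iff_natCast_dvd_of_two_mul_sub_mem (I := {x | c.f (i + x) ∈ cycVerts d})
    (by simpa [hij] using d.f_mem_cycVerts j) ?_ ?_ x
  · rintro p ⟨p', hp'⟩ x ⟨y, hy⟩
    obtain ⟨g, -, hgc, hgd⟩ := exists_reflection h3 hne hp'.symm
    refine ⟨p' - (y - p'), ?_⟩
    rw [← hgd, add_sub_cancel, hy, show i + x = i + p + (x - p) by ring, hgc]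
    ring_nf
  · have himg : (fun x => c.f (i + x)) '' {x | c.f (i + x) ∈ cycVerts d} =
        cycVerts c ∩ cycVerts d := by
      ext v
      constructor
      · rintro ⟨x, hx, rfl⟩; exact ⟨c.f_mem_cycVerts _, hx⟩
      · rintro ⟨⟨z, rfl⟩, hz⟩; exact ⟨z - i, by simpa using hz, by simp⟩
    rw [← Set.ncard_image_of_injective _ fun x y h => add_left_cancel (c.inj h), himg,
      ncard_cycVerts_inter hne ⟨_, c.f_mem_cycVerts i, hij ▸ d.f_mem_cycVerts j⟩,
      S.att_mul_ell]

theorem Cyc.induction (P : S.Cyc → Prop) {c₀ : S.Cyc} (h₀ : P c₀)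
    (hstep : ∀ c d : S.Cyc, (cycVerts c ∩ cycVerts d).Nonempty → P c → P d) (c : S.Cyc) :
    P c := by
  have hwalk : ∀ u v (w : S.Γ.Walk u v), (∀ c : S.Cyc, u ∈ cycVerts c → P c) →
      ∀ c : S.Cyc, v ∈ cycVerts c → P c := by
    intro u v w
    induction w with
    | nil => exact id
    | cons hadj _ ih =>
      refine fun hu => ih fun d hd => ?_
      obtain ⟨F, hF⟩ := exists_mk_mem_cycEdges hadj
      have hmem : ∀ x ∈ s(_, _), x ∈ cycVerts F := fun x hx => by
        rw [← suppOf_cycEdges]; exact ⟨_, hF, hx⟩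
      exact hstep F d ⟨_, hmem _ (Sym2.mem_mk_right _ _), hd⟩
        (hu F (hmem _ (Sym2.mem_mk_left _ _)))
  obtain ⟨w⟩ := S.conn.preconnected (c₀.f 0) (c.f 0)
  exact hwalk _ _ w (fun d hd => hstep c₀ d ⟨_, c₀.f_mem_cycVerts 0, hd⟩ h₀) c
    (c.f_mem_cycVerts 0)

variable {γ : S.Γ ≃g S.Γ}

theorem cycEdges_map_of_mem_altKernel (hγ : γ ∈ S.altKernel) (c : S.Cyc) :
    cycEdges (c.map γ (O_map_iff hγ.1)) = cycEdges c := by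
  rw [cycEdges_map]
  exact hγ.2 _ ⟨c, rfl⟩

theorem map_mem_cycVerts_of_mem_altKernel (hγ : γ ∈ S.altKernel) {c : S.Cyc} {v : V}
    (hv : v ∈ cycVerts c) : γ v ∈ cycVerts c := by
  obtain ⟨i, rfl⟩ := hv
  rw [← cycVerts_eq_of_cycEdges_eq (cycEdges_map_of_mem_altKernel hγ c)]
  exact ⟨i, rfl⟩

/-- `γ` moves every vertex of `c` by a multiple of `ℓ`, as it preserves the other alternating
cycle through that vertex; a reflection would move neighbouring vertices by amounts differing
by `2 < ℓ`. -/
theorem exists_rotatesBy_of_mem_altKernel (h3 : 3 ≤ S.att) (hℓ : 2 < S.ell)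
    (hγ : γ ∈ S.altKernel) (c : S.Cyc) :
    ∃ t, c.RotatesBy γ t ∧ (S.ell : ZMod (2 * S.r)) ∣ t := by
  have hmove : ∀ x t, γ (c.f x) = c.f (x + t) → (S.ell : ZMod (2 * S.r)) ∣ t := by
    intro x t h
    obtain ⟨d, ⟨y, hy⟩, hne⟩ := exists_cycEdges_ne_of_mem (c.f_mem_cycVerts x)
    rw [← mem_cycVerts_iff_dvd h3 (Ne.symm hne) hy.symm, ← h]
    exact map_mem_cycVerts_of_mem_altKernel hγ ⟨y, hy⟩
  obtain ⟨p, hp | hp⟩ :=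
    exists_eq_add_or_eq_sub_of_cycEdges_eq (cycEdges_map_of_mem_altKernel hγ c)
  · have hrot : c.RotatesBy γ p := fun i => by rw [← map_f c γ (O_map_iff hγ.1), hp, add_comm]
    exact ⟨p, hrot, hmove 0 p (hrot 0)⟩
  · have hx : ∀ x, (S.ell : ZMod (2 * S.r)) ∣ p - 2 * x := fun x =>
      hmove x _ (by rw [← map_f c γ (O_map_iff hγ.1), hp]; ring_nf)
    have h2 : (S.ell : ZMod (2 * S.r)) ∣ ((2 : ℕ) : ZMod (2 * S.r)) := by
      simpa using dvd_sub (hx 0) (hx 1)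
    have := Nat.le_of_dvd two_pos ((ZMod.natCast_dvd_natCast_iff S.ell_dvd 2).mp h2)
    omega

theorem eq_one_of_rotatesBy_zero (h3 : 3 ≤ S.att) (hℓ : 2 < S.ell) (hγ : γ ∈ S.altKernel)
    {c : S.Cyc} (hc : c.RotatesBy γ 0) : γ = 1 := by
  have hall : ∀ d : S.Cyc, d.RotatesBy γ 0 := by
    refine Cyc.induction _ hc fun c d ⟨_, ⟨i, rfl⟩, ⟨j, hj⟩⟩ hc => ?_
    obtain ⟨t, ht, -⟩ := exists_rotatesBy_of_mem_altKernel h3 hℓ hγ d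
    have : j + t = j := d.inj (by rw [← ht, hj, hc, add_zero])
    rwa [add_eq_left.mp this] at ht
  ext v
  obtain ⟨d, i, rfl⟩ := exists_mem_cycVerts (S := S) v
  simpa using hall d i

theorem f_natCast_mul_eq (h3 : 3 ≤ S.att) {c d : S.Cyc} (hne : cycEdges c ≠ cycEdges d)
    (hb : c.f 0 = d.f 0) {σ : ZMod (2 * S.r)} (hσ : d.f σ = c.f S.ell) (m : ℕ) :
    d.f (m * σ) = c.f (m * S.ell) := by
  suffices d.f (m * σ) = c.f (m * S.ell) ∧ d.f ((m + 1) * σ) = c.f ((m + 1) * S.ell) from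
    this.1
  induction m with
  | zero => simpa using ⟨hb.symm, hσ⟩
  | succ m ih =>
    push_cast
    refine ⟨ih.2, ?_⟩
    obtain ⟨g, -, hgc, hgd⟩ := exists_reflection h3 hne ih.2.symm
    calc d.f ((m + 1 + 1) * σ) = d.f ((m + 1) * σ - -σ) := by congr 1; ring
      _ = g (d.f ((m + 1) * σ + -σ)) := (hgd _).symm
      _ = g (d.f (m * σ)) := by congr 2; ring
      _ = g (c.f ((m + 1) * S.ell + -S.ell)) := by rw [ih.1]; congr 2; ring
      _ = c.f ((m + 1 + 1) * S.ell) := by rw [hgc]; congr 1; ring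

theorem exists_map_of_isTail {c d c' d' : S.Cyc} (hne : cycEdges c ≠ cycEdges d)
    (hb : c.f 0 = d.f 0) (ht : IsTail c 0) (hne' : cycEdges c' ≠ cycEdges d')
    (hb' : c'.f 0 = d'.f 0) (ht' : IsTail c' 0) :
    ∃ g ∈ S.G, (∀ i, g (c.f i) = c'.f i) ∧
      ((∀ j, g (d.f j) = d'.f j) ∨ ∀ j, g (d.f j) = d'.f (-j)) := by
  obtain ⟨g, hg, h₀, h₁⟩ := S.O_orbit ht ht'
  simp only [zero_add] at h₁
  have hc : ∀ i, g (c.f i) = c'.f i := by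
    have hE : cycEdges (c.map g (O_map_iff hg)) = cycEdges c' :=
      cycEdges_eq_of_mem_of_mem
        (by simpa [h₀, h₁] using (c.map g (O_map_iff hg)).mk_mem_cycEdges 0)
        (c'.mk_mem_cycEdges 0)
    intro i
    simpa using eq_shift_of_cycEdges_eq hE (p := 0) (by simpa using h₀) (by simpa using h₁) i
  exact ⟨g, hg, hc, map_eq_or_map_eq_neg_of_map_eq hg hne hb hne' hb' hc⟩

theorem exists_isTail_of_inter (h3 : 3 ≤ S.att) (hodd : Odd S.ell) {c d : S.Cyc}
    (hne : cycEdges c ≠ cycEdges d) (hint : (cycVerts c ∩ cycVerts d).Nonempty) :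
    ∃ i j, c.f i = d.f j ∧ IsTail c i := by
  obtain ⟨_, ⟨i, rfl⟩, ⟨j, hj⟩⟩ := hint
  by_cases ht : IsTail c i
  · exact ⟨i, j, hj.symm, ht⟩
  · have htd : IsTail d j := not_not.mp (mt (isTail_iff_not_isTail hj.symm hne).mpr ht)
    obtain ⟨i', hi'⟩ : d.f (j + S.ell) ∈ cycVerts c :=
      (mem_cycVerts_iff_dvd h3 (Ne.symm hne) hj _).mpr dvd_rfl
    refine ⟨i', j + S.ell, hi', (isTail_iff_not_isTail hi' hne).mpr ?_⟩
    have := Nat.not_even_iff_odd.mpr hodd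
    rw [isTail_add_natCast]
    tauto

end Setup

namespace JumpData

open Setup AltCycle

variable {V : Type*} {S : Setup V} (J : JumpData S)

theorem ell_eq : J.ell = S.ell :=
  Nat.eq_of_mul_eq_mul_left S.att_pos (J.hell.trans S.att_mul_ell.symm)

theorem f_zero_eq : J.c.f 0 = J.c'.f 0 := J.hc.trans J.hc'.symm

theorem isTail : IsTail J.c 0 := by
  rw [IsTail, zero_add, J.hc]
  exact J.htail₁

theorem exists_slope (h3 : 3 ≤ S.att) : ∃ s : ℕ, J.c'.f (s * S.ell) = J.c.f S.ell := by
  obtain ⟨σ, hσ⟩ : J.c.f (0 + S.ell) ∈ cycVerts J.c' :=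
    (mem_cycVerts_iff_dvd h3 J.hne J.f_zero_eq _).mpr dvd_rfl
  obtain ⟨u, rfl⟩ := (mem_cycVerts_iff_dvd h3 (Ne.symm J.hne) J.f_zero_eq.symm _).mp
    (by rw [zero_add, hσ]; exact J.c.f_mem_cycVerts _)
  exact ⟨u.val, by simpa [mul_comm] using hσ⟩

variable {J} {s : ℕ}

theorem exists_signEq_slope (h3 : 3 ≤ S.att) (hs : J.c'.f (s * S.ell) = J.c.f S.ell)
    {c d : S.Cyc} (hne : cycEdges c ≠ cycEdges d) (hb : c.f 0 = d.f 0) (ht : IsTail c 0) :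
    ∃ σ, SignEq σ ((s : ZMod (2 * S.r)) * S.ell) ∧
      ∀ m : ℕ, d.f (m * σ) = c.f (m * S.ell) := by
  have hJ := f_natCast_mul_eq h3 J.hne J.f_zero_eq hs
  obtain ⟨g, -, hc, hd | hd⟩ := exists_map_of_isTail hne hb ht J.hne J.f_zero_eq J.isTail
  · exact ⟨s * S.ell, SignEq.refl _, fun m => g.injective (by rw [hd, hc, hJ])⟩
  · refine ⟨-((s : ZMod (2 * S.r)) * S.ell), Or.inr rfl, fun m => g.injective ?_⟩
    rw [hd, hc, ← hJ, mul_neg, neg_neg]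

theorem signEq_of_rotatesBy_of_isTail (h3 : 3 ≤ S.att) (hs : J.c'.f (s * S.ell) = J.c.f S.ell)
    {c d : S.Cyc} (hne : cycEdges c ≠ cycEdges d) (hb : c.f 0 = d.f 0) (ht : IsTail c 0)
    {g : V → V} {t t' : ZMod (2 * S.r)} (hc : c.RotatesBy g t) (hd : d.RotatesBy g t')
    (hℓt : (S.ell : ZMod (2 * S.r)) ∣ t) : SignEq t' (s * t) := by
  obtain ⟨σ, hσ, hlin⟩ := exists_signEq_slope h3 hs hne hb ht
  obtain ⟨u, rfl⟩ := hℓt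
  have hu := hlin u.val
  simp only [ZMod.natCast_val, ZMod.cast_id', id_eq] at hu
  have : t' = u * σ := d.inj <| by
    rw [← zero_add t', ← hd, ← hb, hc, zero_add, hu, mul_comm u]
  rw [this, show (s : ZMod (2 * S.r)) * (S.ell * u) = u * (s * S.ell) by ring]
  exact hσ.mul_left u

theorem signEq_of_rotatesBy (h3 : 3 ≤ S.att) (hodd : Odd S.ell)
    (hs : J.c'.f (s * S.ell) = J.c.f S.ell) {c d : S.Cyc} (hne : cycEdges c ≠ cycEdges d)
    (hint : (cycVerts c ∩ cycVerts d).Nonempty) {g : V → V} {t t' : ZMod (2 * S.r)}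
    (hc : c.RotatesBy g t) (hd : d.RotatesBy g t') (hℓt : (S.ell : ZMod (2 * S.r)) ∣ t) :
    SignEq t' (s * t) := by
  obtain ⟨i, j, hij, ht⟩ := exists_isTail_of_inter h3 hodd hne hint
  exact signEq_of_rotatesBy_of_isTail h3 hs (c := c.shift i) (d := d.shift j)
    (by rwa [cycEdges_shift, cycEdges_shift]) (by simpa using hij) (by simpa [IsTail] using ht)
    (hc.shift i) (hd.shift j) hℓt

theorem signEq_qt (h3 : 3 ≤ S.att) (hs : J.c'.f (s * S.ell) = J.c.f S.ell) :
    SignEq ((J.qt : ZMod (2 * S.r)) * S.ell) (s * S.ell) := by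
  have hqt := J.hqt
  rw [J.ell_eq] at hqt
  push_cast at hqt
  rcases hqt with h | h
  · exact Or.inl (J.c'.inj (h.trans hs.symm))
  · obtain ⟨g, -, hgc, hgd⟩ := exists_reflection h3 J.hne J.f_zero_eq
    refine Or.inr (J.c'.inj (h.trans ?_))
    calc J.c.f (-S.ell) = g (J.c.f S.ell) := by simpa using (hgc S.ell).symm
      _ = J.c'.f (-(s * S.ell)) := by rw [← hs]; simpa using hgd (s * S.ell)

theorem signEq_qh (h3 : 3 ≤ S.att) (hs : J.c'.f (s * S.ell) = J.c.f S.ell) :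
    SignEq ((J.qh : ZMod (2 * S.r)) * s * S.ell) S.ell := by
  have hqh := J.hqh
  rw [J.ell_eq] at hqh
  push_cast at hqh
  have hlin := f_natCast_mul_eq h3 J.hne J.f_zero_eq hs J.qh
  rcases hqh with h | h
  · exact Or.inl (J.c'.inj (by rw [mul_assoc, hlin, h]))
  · exact Or.inr (J.c'.inj (by rw [mul_assoc, hlin, h]))

theorem signEq_jump_mul (h3 : 3 ≤ S.att) (hs : J.c'.f (s * S.ell) = J.c.f S.ell) {k : ℕ}
    {t : ZMod (2 * S.r)} (hℓt : (S.ell : ZMod (2 * S.r)) ∣ t)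
    (hk : SignEq ((k * S.ell : ℕ) : ZMod (2 * S.r)) t) (hsq : SignEq (s * (s * t)) t) :
    SignEq ((J.jump * k * S.ell : ℕ) : ZMod (2 * S.r)) (s * t) := by
  push_cast at hk ⊢
  rcases min_choice J.qt J.qh with h | h <;> rw [JumpData.jump, h]
  · rw [show (J.qt : ZMod (2 * S.r)) * k * S.ell = k * (J.qt * S.ell) by ring]
    calc SignEq _ ((k : ZMod (2 * S.r)) * (s * S.ell)) := (signEq_qt h3 hs).mul_left _
      _ = s * (k * S.ell) := by ring
      SignEq _ (s * t) := hk.mul_left _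
  · obtain ⟨u, rfl⟩ := hℓt
    rw [mul_assoc]
    calc SignEq _ ((J.qh : ZMod (2 * S.r)) * (s * (s * (S.ell * u)))) :=
          (hk.mul_left _).trans (hsq.symm.mul_left _)
      _ = (J.qh * s * S.ell) * (s * u) := by ring
      SignEq _ (S.ell * (s * u)) := (signEq_qh h3 hs).mul_right _
      _ = s * (S.ell * u) := by ring

variable {γ : S.Γ ≃g S.Γ}

theorem signEq_mul_mul_of_rotatesBy (h3 : 3 ≤ S.att) (hℓ : 2 < S.ell) (hodd : Odd S.ell)
    (hs : J.c'.f (s * S.ell) = J.c.f S.ell) (hγ : γ ∈ S.altKernel) {c : S.Cyc}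
    {t : ZMod (2 * S.r)} (hc : c.RotatesBy γ t) (hℓt : (S.ell : ZMod (2 * S.r)) ∣ t) :
    SignEq (s * (s * t)) t := by
  obtain ⟨d, hd, hne⟩ := exists_cycEdges_ne_of_mem (c.f_mem_cycVerts 0)
  obtain ⟨t', hd', hℓt'⟩ := exists_rotatesBy_of_mem_altKernel h3 hℓ hγ d
  have h₁ :=
    signEq_of_rotatesBy h3 hodd hs (Ne.symm hne) ⟨_, c.f_mem_cycVerts 0, hd⟩ hc hd' hℓt
  have h₂ := signEq_of_rotatesBy h3 hodd hs hne ⟨_, hd, c.f_mem_cycVerts 0⟩ hd' hc hℓt'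
  exact (h₂.trans (h₁.mul_left _)).symm

theorem signEq_or_signEq_of_rotatesBy (h3 : 3 ≤ S.att) (hℓ : 2 < S.ell) (hodd : Odd S.ell)
    (hs : J.c'.f (s * S.ell) = J.c.f S.ell) (hγ : γ ∈ S.altKernel) {c : S.Cyc}
    {t₀ : ZMod (2 * S.r)} (hc : c.RotatesBy γ t₀)
    (hℓt₀ : (S.ell : ZMod (2 * S.r)) ∣ t₀) (d : S.Cyc) {t : ZMod (2 * S.r)}
    (hd : d.RotatesBy γ t) :
    SignEq t t₀ ∨ SignEq t (s * t₀) := by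
  have hsq := signEq_mul_mul_of_rotatesBy h3 hℓ hodd hs hγ hc hℓt₀
  refine Cyc.induction (fun d => ∀ t, d.RotatesBy γ t → SignEq t t₀ ∨ SignEq t (s * t₀))
    (fun t ht => Or.inl (Or.inl (ht.unique hc))) (fun c' d' hint hc' t ht => ?_) d t hd
  obtain ⟨t', ht', hℓt'⟩ := exists_rotatesBy_of_mem_altKernel h3 hℓ hγ c'
  have hrel : SignEq t t' ∨ SignEq t (s * t') := by
    by_cases hE : cycEdges d' = cycEdges c'
    · rcases ht'.of_cycEdges_eq hE with h | h
      exacts [Or.inl (Or.inl (ht.unique h)), Or.inl (Or.inr (ht.unique h))]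
    · exact Or.inr (signEq_of_rotatesBy h3 hodd hs (Ne.symm hE) hint ht' ht hℓt')
  rcases hc' t' ht' with h | h <;> rcases hrel with h' | h'
  exacts [Or.inl (h'.trans h), Or.inr (h'.trans (h.mul_left _)), Or.inr (h'.trans h),
    Or.inl (h'.trans ((h.mul_left _).trans hsq))]

end JumpData

end HalfArc

open HalfArc.Setup HalfArc.JumpData

/-- Corollary 6.2 of the paper: nontrivial elements of the kernel
act as `kℓ`-step rotations, and as a `kℓ`-step rotation on one and a `qkℓ`-step
rotation on the other of any two non-disjoint `G`-alternating cycles. -/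
theorem statement_15 {V : Type*} (S : Setup V) (h3 : 3 ≤ S.att) (har : S.att < S.r)
    (hdvd : ¬ S.att ∣ S.r) (J : JumpData S)
    (γ : S.Γ ≃g S.Γ) (hγ : γ ∈ S.altKernel) (hγ1 : γ ≠ 1)
    (c : AltCycle S.Γ S.O (2 * S.r)) :
    ∃ k : ℕ, 0 < k ∧ 2 * k ≤ S.att ∧ IsRot c (γ : V → V) (k * J.ell) ∧
      ∀ c₁ c₂ : AltCycle S.Γ S.O (2 * S.r), cycEdges c₁ ≠ cycEdges c₂ →
        (cycVerts c₁ ∩ cycVerts c₂).Nonempty →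
        ((IsRot c₁ (γ : V → V) (k * J.ell) ∧ IsRot c₂ (γ : V → V) (J.jump * k * J.ell)) ∨
         (IsRot c₁ (γ : V → V) (J.jump * k * J.ell) ∧ IsRot c₂ (γ : V → V) (k * J.ell))) := by
  have hℓ := S.two_lt_ell har
  have hodd := S.odd_ell hdvd
  obtain ⟨s, hs⟩ := J.exists_slope h3
  obtain ⟨t₀, hc, hℓt₀⟩ := exists_rotatesBy_of_mem_altKernel h3 hℓ hγ c
  have ht₀ : t₀ ≠ 0 := fun h => hγ1 (eq_one_of_rotatesBy_zero h3 hℓ hγ (h ▸ hc))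
  obtain ⟨k, hk0, h2k, hk⟩ := ZMod.exists_signEq_mul_of_dvd S.att_mul_ell hℓt₀ ht₀
  have hsq := signEq_mul_mul_of_rotatesBy h3 hℓ hodd hs hγ hc hℓt₀
  have hjump := signEq_jump_mul h3 hs hℓt₀ hk hsq
  rw [J.ell_eq]
  refine ⟨k, hk0, h2k, hc.isRot hk, fun c₁ c₂ hne hint => ?_⟩
  obtain ⟨t₁, h₁, hℓt₁⟩ := exists_rotatesBy_of_mem_altKernel h3 hℓ hγ c₁
  obtain ⟨t₂, h₂, -⟩ := exists_rotatesBy_of_mem_altKernel h3 hℓ hγ c₂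
  have h₁₂ := signEq_of_rotatesBy h3 hodd hs hne hint h₁ h₂ hℓt₁
  rcases signEq_or_signEq_of_rotatesBy h3 hℓ hodd hs hγ hc hℓt₀ c₁ h₁ with h | h
  · exact Or.inl ⟨h₁.isRot (hk.trans h.symm),
      h₂.isRot (hjump.trans (h₁₂.trans (h.mul_left _)).symm)⟩
  · exact Or.inr ⟨h₁.isRot (hjump.trans h.symm),
      h₂.isRot (hk.trans (h₁₂.trans ((h.mul_left _).trans hsq)).symm)⟩
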